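/- (Covering lemma.) Let F ⊆ ℝⁿ be a non-empty set, let a, b, c > 0 be fixed, and let O := {x ∈ ℝⁿ : 0 < d(x,F) ≤ a·m(x)}. There exists a sequence (x_k)_{k≥1} in O such that: (i) O ⊆ ⋃_{k≥1} B(x_k, b·d(x_k,F)); and (ii) Σ_{k≥1} γ(B(x_k, c·d(x_k,F))) ≤ C γ(O), where C depends only on a, b, c, and the dimension n. -/

import Mathlib

open MeasureTheory Metric Set
open scoped ENNReal NNReal BigOperators

noncomputable section

/-- The gaussian measure `dγ(x) = (2π)^{-n/2} exp(-|x|²/2) dx` on `ℝⁿ`. -/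
def gaussMeasure (n : ℕ) : Measure (EuclideanSpace ℝ (Fin n)) :=
  volume.withDensity fun x =>
    ENNReal.ofReal ((2 * Real.pi) ^ (-(n : ℝ) / 2) * Real.exp (-‖x‖ ^ 2 / 2))

/-- `m(x) = min {1, 1/‖x‖}`. -/
def mfun {n : ℕ} (x : EuclideanSpace ℝ (Fin n)) : ℝ :=
  if ‖x‖ ≤ 1 then 1 else ‖x‖⁻¹

/-- Ornstein–Uhlenbeck (Mehler) semigroup `e^{-tL} u (x)`. -/
def mehler (n : ℕ) (u : EuclideanSpace ℝ (Fin n) → ℝ) (t : ℝ)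
    (x : EuclideanSpace ℝ (Fin n)) : ℝ :=
  ∫ y, u (Real.exp (-t) • x + Real.sqrt (1 - Real.exp (-2 * t)) • y) ∂gaussMeasure n

/-- The gaussian conical square function `S_a u (x)`. -/
def Sfun (n : ℕ) (a : ℝ) (u : EuclideanSpace ℝ (Fin n) → ℝ)
    (x : EuclideanSpace ℝ (Fin n)) : ℝ≥0∞ :=
  (∫⁻ t in Set.Ioo (0 : ℝ) (a * mfun x),
      (∫⁻ y in ball x t,
        (gaussMeasure n (ball y t))⁻¹ *
          ENNReal.ofReal ((t * ‖fderiv ℝ (mehler n u (t ^ 2)) y‖) ^ 2) ∂gaussMeasure n) /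
        ENNReal.ofReal t) ^ (1 / 2 : ℝ)

/-- The gaussian non-tangential maximal function `T*_{(A,a)} u (x)`. -/
def Tstar (n : ℕ) (A a : ℝ) (u : EuclideanSpace ℝ (Fin n) → ℝ)
    (x : EuclideanSpace ℝ (Fin n)) : ℝ≥0∞ :=
  ⨆ (y : EuclideanSpace ℝ (Fin n)) (t : ℝ) (_ : dist y x < A * t) (_ : 0 < t)
      (_ : t < a * mfun x),
    ((gaussMeasure n (ball y (A * t)))⁻¹ *
        ∫⁻ z in ball y (A * t), ENNReal.ofReal ((mehler n u (t ^ 2) z) ^ 2) ∂gaussMeasure n) ^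
      (1 / 2 : ℝ)

/-- The admissible (gaussian) Hardy–Littlewood maximal function `M*_a f (x)`. -/
def Mstar (n : ℕ) (a : ℝ) (f : EuclideanSpace ℝ (Fin n) → ℝ)
    (x : EuclideanSpace ℝ (Fin n)) : ℝ≥0∞ :=
  ⨆ (r : ℝ) (_ : 0 < r) (_ : r ≤ a * mfun x),
    (gaussMeasure n (ball x r))⁻¹ *
      ∫⁻ y in ball x r, ENNReal.ofReal |f y| ∂gaussMeasure n

/-- The admissible cone `Γ^{(A,a)}_x(γ)`. -/
def cone (n : ℕ) (A a : ℝ) (x : EuclideanSpace ℝ (Fin n)) :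
    Set (EuclideanSpace ℝ (Fin n) × ℝ) :=
  {p | dist p.1 x < A * p.2 ∧ 0 < p.2 ∧ p.2 < a * mfun x}

/-- The modified admissible cone `Γ̃^{(A,a)}_x(γ)`. -/
def coneT (n : ℕ) (A a : ℝ) (x : EuclideanSpace ℝ (Fin n)) :
    Set (EuclideanSpace ℝ (Fin n) × ℝ) :=
  {p | dist p.1 x < A * p.2 ∧ 0 < p.2 ∧ p.2 < a * mfun p.1}

/-- The dyadic cube `2^{-k}(v + [0,1)ⁿ)` of scale `k`. -/
def dyadicCube (n k : ℕ) (v : Fin n → ℤ) : Set (EuclideanSpace ℝ (Fin n)) :=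
  {x | ∀ i, x i ∈ Set.Ico ((2 : ℝ) ^ (-(k : ℤ)) * v i) ((2 : ℝ) ^ (-(k : ℤ)) * (v i + 1))}

/-- The centre of the dyadic cube `2^{-k}(v + [0,1)ⁿ)`. -/
def cubeCenter (n k : ℕ) (v : Fin n → ℤ) : EuclideanSpace ℝ (Fin n) :=
  WithLp.toLp 2 (fun i => (2 : ℝ) ^ (-(k : ℤ)) * (v i + 1 / 2))

/-- The layers `L_0 = [-1,1)ⁿ`, `L_l = [-2^l,2^l)ⁿ \ [-2^{l-1},2^{l-1})ⁿ`. -/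
def layer (n : ℕ) : ℕ → Set (EuclideanSpace ℝ (Fin n))
  | 0 => {x | ∀ i, x i ∈ Set.Ico (-1 : ℝ) 1}
  | (l + 1) =>
      {x | ∀ i, x i ∈ Set.Ico (-(2 : ℝ) ^ (l + 1)) ((2 : ℝ) ^ (l + 1))} \
        {x | ∀ i, x i ∈ Set.Ico (-(2 : ℝ) ^ l) ((2 : ℝ) ^ l)}

/-- The cube `α ∘ Q` with the same centre as `Q = 2^{-k}(v + [0,1)ⁿ)` and `α` times
its side-length. -/
def scaledCube (n k : ℕ) (v : Fin n → ℤ) (α : ℝ) : Set (EuclideanSpace ℝ (Fin n)) :=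
  {x | ∀ i, x i ∈ Set.Ico (cubeCenter n k v i - α * (2 : ℝ) ^ (-(k : ℤ)) / 2)
      (cubeCenter n k v i + α * (2 : ℝ) ^ (-(k : ℤ)) / 2)}

/-- The Ornstein–Uhlenbeck operator `Lf(x) = -Δf(x) + x·∇f(x)`. -/
def OU (n : ℕ) (f : EuclideanSpace ℝ (Fin n) → ℂ) (x : EuclideanSpace ℝ (Fin n)) : ℂ :=
  -(∑ i : Fin n, iteratedFDeriv ℝ 2 f x ![EuclideanSpace.single i 1, EuclideanSpace.single i 1]) +
    fderiv ℝ f x x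


/-! Sort the points of `O` by the dyadic scale `2 ^ k ≤ d(x, F) < 2 ^ (k + 1)` and, at that
scale, by a lattice of mesh comparable to `b 2 ^ k`; one point chosen in each nonempty cell gives
the covering, since cells have diameter `< b 2 ^ k`. Each chosen point `x`, with `d = d(x, F)`,
has within distance `d` an inner ball of radius comparable to `d` contained in `O`. On balls of
radius `≲ m` the gaussian density varies by a bounded factor, so `γ(B(x, c d))` is at most a
constant times the gaussian measure of the inner ball. The inner balls overlap boundedly, since a
point meets only boundedly many scales and lattice points, so their measures add up to `≲ γ(O)`.
-/

lemma tsum_measure_le_of_bounded_overlap {ι α : Type*} [Countable ι] [MeasurableSpace α]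
    (μ : Measure α) {T : ι → Set α} (hT : ∀ j, MeasurableSet (T j)) {N : ℕ}
    (hN : ∀ y, ∃ K : Finset ι, K.card ≤ N ∧ ∀ j, y ∈ T j → j ∈ K) :
    ∑' j, μ (T j) ≤ N * μ (⋃ j, T j) := by
  have hpoint : ∀ y, ∑' j, (T j).indicator 1 y ≤ N * (⋃ j, T j).indicator (1 : α → ℝ≥0∞) y := by
    intro y
    by_cases hy : y ∈ ⋃ j, T j
    · obtain ⟨K, hK, hmem⟩ := hN y
      rw [indicator_of_mem hy, Pi.one_apply, mul_one]
      calc ∑' j, (T j).indicator 1 y = ∑ j ∈ K, (T j).indicator (1 : α → ℝ≥0∞) y :=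
            tsum_eq_sum fun j hj => indicator_of_notMem (fun h => hj (hmem j h)) _
        _ ≤ ∑ _j ∈ K, 1 := Finset.sum_le_sum fun j _ => indicator_le (fun _ _ => le_rfl) y
        _ ≤ N := by simpa using hK
    · rw [indicator_of_notMem hy, mul_zero]
      simp only [mem_iUnion, not_exists] at hy
      simp [indicator_of_notMem (hy _)]
  calc ∑' j, μ (T j) = ∑' j, ∫⁻ y, (T j).indicator 1 y ∂μ := by
        simp only [lintegral_indicator_one (hT _)]
    _ = ∫⁻ y, ∑' j, (T j).indicator 1 y ∂μ :=
        (lintegral_tsum fun j => (measurable_one.indicator (hT j)).aemeasurable).symm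
    _ ≤ ∫⁻ y, N * (⋃ j, T j).indicator 1 y ∂μ := lintegral_mono hpoint
    _ = N * μ (⋃ j, T j) := by
        rw [lintegral_const_mul _ (measurable_one.indicator (MeasurableSet.iUnion hT)),
          lintegral_indicator_one (MeasurableSet.iUnion hT)]

section mfun

variable {n : ℕ}

lemma mfun_eq_inv_max (x : EuclideanSpace ℝ (Fin n)) : mfun x = (max 1 ‖x‖)⁻¹ := by
  unfold mfun
  split_ifs with h
  · rw [max_eq_left h, inv_one]
  · rw [max_eq_right (not_le.1 h).le]

lemma mfun_pos (x : EuclideanSpace ℝ (Fin n)) : 0 < mfun x := by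
  rw [mfun_eq_inv_max]; positivity

lemma mfun_le_one (x : EuclideanSpace ℝ (Fin n)) : mfun x ≤ 1 := by
  rw [mfun_eq_inv_max]; exact inv_le_one_of_one_le₀ (le_max_left _ _)

lemma norm_mul_mfun_le_one (x : EuclideanSpace ℝ (Fin n)) : ‖x‖ * mfun x ≤ 1 := by
  rw [mfun_eq_inv_max, ← div_eq_mul_inv]
  exact div_le_one_of_le₀ (le_max_right _ _) (by positivity)

lemma lipschitzWith_mfun : LipschitzWith 1 (mfun (n := n)) := by
  refine LipschitzWith.of_dist_le_mul fun x y => ?_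
  have hx : 1 ≤ max 1 ‖x‖ := le_max_left _ _
  have hy : 1 ≤ max 1 ‖y‖ := le_max_left _ _
  rw [NNReal.coe_one, one_mul, Real.dist_eq, mfun_eq_inv_max, mfun_eq_inv_max,
    inv_sub_inv (by positivity) (by positivity), abs_div,
    abs_of_pos (mul_pos (one_pos.trans_le hx) (one_pos.trans_le hy))]
  calc |max 1 ‖y‖ - max 1 ‖x‖| / (max 1 ‖x‖ * max 1 ‖y‖) ≤ |max 1 ‖y‖ - max 1 ‖x‖| :=
        div_le_self (abs_nonneg _) (one_le_mul_of_one_le_of_one_le hx hy)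
    _ ≤ |‖y‖ - ‖x‖| := by simpa only [max_comm (1 : ℝ)] using abs_max_sub_max_le_abs ‖y‖ ‖x‖ 1
    _ ≤ dist x y := by rw [dist_comm, dist_eq_norm]; exact abs_norm_sub_norm_le y x

lemma mfun_le_mul_mfun_of_dist_le {a : ℝ} (ha : 0 ≤ a) {x p : EuclideanSpace ℝ (Fin n)}
    (hxp : dist x p ≤ a * mfun x) : mfun x ≤ (1 + a) * mfun p := by
  rw [mfun_eq_inv_max, mfun_eq_inv_max, ← div_eq_mul_inv, le_div_iff₀ (by positivity),
    ← div_eq_inv_mul, div_le_iff₀ (by positivity)]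
  have hp : ‖p‖ ≤ ‖x‖ + a := by
    have := norm_le_norm_add_norm_sub' p x
    rw [← dist_eq_norm, dist_comm] at this
    nlinarith [mfun_le_one x]
  have h1 : 1 ≤ max 1 ‖x‖ := le_max_left _ _
  have h2 : ‖x‖ ≤ max 1 ‖x‖ := le_max_right _ _
  rw [max_le_iff]
  constructor <;> nlinarith

end mfun

section gaussDensity

variable {n : ℕ}

def gaussDensity (n : ℕ) (x : EuclideanSpace ℝ (Fin n)) : ℝ :=
  (2 * Real.pi) ^ (-(n : ℝ) / 2) * Real.exp (-‖x‖ ^ 2 / 2)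

lemma gaussMeasure_eq_withDensity :
    gaussMeasure n = volume.withDensity fun x => ENNReal.ofReal (gaussDensity n x) := rfl

lemma gaussDensity_le_mul_of_mem_closedBall {p w w' : EuclideanSpace ℝ (Fin n)} {R : ℝ}
    (hw : w ∈ closedBall p R) (hw' : w' ∈ closedBall p R) :
    gaussDensity n w ≤ Real.exp (2 * ‖p‖ * R + R ^ 2 / 2) * gaussDensity n w' := by
  rw [mem_closedBall, dist_eq_norm] at hw hw'
  have hR : 0 ≤ R := (norm_nonneg _).trans hw
  have hw_lower : ‖p‖ - R ≤ ‖w‖ := by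
    linarith [norm_sub_norm_le p w, norm_sub_rev p w]
  have hw'_upper : ‖w'‖ ≤ ‖p‖ + R := by
    linarith [norm_le_norm_add_norm_sub' w' p]
  have hsq : ‖w'‖ ^ 2 - ‖w‖ ^ 2 ≤ 4 * ‖p‖ * R + R ^ 2 := by
    rcases le_total R ‖p‖ with h | h <;> nlinarith [norm_nonneg w, norm_nonneg w', norm_nonneg p]
  unfold gaussDensity
  rw [mul_left_comm, ← Real.exp_add]
  gcongr
  linarith

lemma gaussMeasure_mul_volume_le {p : EuclideanSpace ℝ (Fin n)} {R : ℝ}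
    {A A' : Set (EuclideanSpace ℝ (Fin n))} (hA : A ⊆ closedBall p R)
    (hA' : A' ⊆ closedBall p R) :
    gaussMeasure n A * volume A' ≤
      ENNReal.ofReal (Real.exp (2 * ‖p‖ * R + R ^ 2 / 2)) * volume A * gaussMeasure n A' := by
  set L := Real.exp (2 * ‖p‖ * R + R ^ 2 / 2)
  have hmeas : Measurable fun x => ENNReal.ofReal (gaussDensity n x) := by
    unfold gaussDensity; fun_prop
  have hpoint : ∀ w' ∈ A',
      gaussMeasure n A ≤ ENNReal.ofReal L * volume A * ENNReal.ofReal (gaussDensity n w') := by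
    intro w' hw'
    rw [gaussMeasure_eq_withDensity, withDensity_apply' _ A, mul_right_comm,
      ← ENNReal.ofReal_mul (Real.exp_pos _).le, ← setLIntegral_const]
    exact setLIntegral_mono measurable_const fun w hw =>
      ENNReal.ofReal_le_ofReal (gaussDensity_le_mul_of_mem_closedBall (hA hw) (hA' hw'))
  calc gaussMeasure n A * volume A' = ∫⁻ _ in A', gaussMeasure n A := (setLIntegral_const _ _).symm
    _ ≤ ∫⁻ w' in A', ENNReal.ofReal L * volume A * ENNReal.ofReal (gaussDensity n w') :=
        setLIntegral_mono (hmeas.const_mul _) hpoint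
    _ = ENNReal.ofReal L * volume A * gaussMeasure n A' := by
        rw [lintegral_const_mul _ hmeas, gaussMeasure_eq_withDensity, withDensity_apply' _ A']

end gaussDensity

lemma gaussMeasure_ball_le_of_le_mfun {n : ℕ} {p x z : EuclideanSpace ℝ (Fin n)}
    {r ρ R K : ℝ} (hr : 0 < r) (hρ : 0 < ρ) (hx : ball x r ⊆ closedBall p R)
    (hz : ball z ρ ⊆ closedBall p R) (hR : R ≤ K * mfun p) :
    gaussMeasure n (ball x r) ≤
      ENNReal.ofReal (Real.exp (2 * K + K ^ 2 / 2) * (r / ρ) ^ n) * gaussMeasure n (ball z ρ) := by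
  have hR0 : 0 ≤ R := nonempty_closedBall.1 ((nonempty_ball.2 hρ).mono hz)
  have hK : 0 ≤ K := nonneg_of_mul_nonneg_left (hR0.trans hR) (mfun_pos p)
  have hRK : R ≤ K := hR.trans (mul_le_of_le_one_right hK (mfun_le_one p))
  have hpR : ‖p‖ * R ≤ K := by
    nlinarith [norm_nonneg p, norm_mul_mfun_le_one p]
  have hexp : Real.exp (2 * ‖p‖ * R + R ^ 2 / 2) ≤ Real.exp (2 * K + K ^ 2 / 2) :=
    Real.exp_le_exp.2 (by nlinarith)
  set V := volume (ball (0 : EuclideanSpace ℝ (Fin n)) 1)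
  have hV0 : V ≠ 0 := (measure_ball_pos volume (0 : EuclideanSpace ℝ (Fin n)) one_pos).ne'
  have hVtop : V ≠ ⊤ := measure_ball_lt_top.ne
  have hvol : ∀ (y : EuclideanSpace ℝ (Fin n)) (s : ℝ), 0 < s →
      volume (ball y s) = ENNReal.ofReal (s ^ n) * V := by
    intro y s hs
    rw [Measure.addHaar_ball_of_pos _ _ hs, finrank_euclideanSpace_fin]
  have key := gaussMeasure_mul_volume_le hx hz
  rw [hvol x r hr, hvol z ρ hρ] at key
  have hρn : ENNReal.ofReal (ρ ^ n) * V ≠ 0 :=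
    mul_ne_zero (ENNReal.ofReal_pos.2 (by positivity)).ne' hV0
  refine (ENNReal.mul_le_mul_iff_left hρn (ENNReal.mul_ne_top ENNReal.ofReal_ne_top hVtop)).1 ?_
  calc gaussMeasure n (ball x r) * (ENNReal.ofReal (ρ ^ n) * V)
      ≤ ENNReal.ofReal (Real.exp (2 * ‖p‖ * R + R ^ 2 / 2)) * (ENNReal.ofReal (r ^ n) * V) *
          gaussMeasure n (ball z ρ) := key
    _ ≤ ENNReal.ofReal (Real.exp (2 * K + K ^ 2 / 2)) * (ENNReal.ofReal (r ^ n) * V) *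
          gaussMeasure n (ball z ρ) := by gcongr
    _ = ENNReal.ofReal (Real.exp (2 * K + K ^ 2 / 2) * (r / ρ) ^ n) *
          gaussMeasure n (ball z ρ) * (ENNReal.ofReal (ρ ^ n) * V) := by
        have hrn : r ^ n = (r / ρ) ^ n * ρ ^ n := by
          rw [div_pow, div_mul_cancel₀ _ (pow_pos hρ n).ne']
        rw [hrn, ENNReal.ofReal_mul (by positivity), ENNReal.ofReal_mul (Real.exp_pos _).le]
        ring

section admissibleRegion

variable {n : ℕ} {F : Set (EuclideanSpace ℝ (Fin n))} {a : ℝ}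

def admissibleRegion (F : Set (EuclideanSpace ℝ (Fin n))) (a : ℝ) :
    Set (EuclideanSpace ℝ (Fin n)) :=
  {x | 0 < infDist x F ∧ infDist x F ≤ a * mfun x}

lemma nonneg_of_mem_admissibleRegion {x : EuclideanSpace ℝ (Fin n)}
    (hx : x ∈ admissibleRegion F a) : 0 ≤ a :=
  (pos_of_mul_pos_left (hx.1.trans_le hx.2) (mfun_pos x).le).le

lemma mem_admissibleRegion_of_mem_ball (ha : 0 ≤ a) {p z y : EuclideanSpace ℝ (Fin n)}
    {r : ℝ} (hp : p ∈ closure F) (hzp : dist z p ≤ 2 * r) (hzF : 2 * r ≤ infDist z F)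
    (hr : 6 * r ≤ mfun p) (hra : 6 * r ≤ a * mfun p) (hy : y ∈ ball z r) :
    y ∈ admissibleRegion F a ∧ r ≤ infDist y F ∧ infDist y F ≤ 3 * r := by
  rw [mem_ball] at hy
  have hyp : dist y p ≤ 3 * r := by linarith [dist_triangle y z p]
  have hlower : r ≤ infDist y F := by
    linarith [infDist_le_infDist_add_dist (x := z) (y := y) (s := F), dist_comm z y]
  have hupper : infDist y F ≤ 3 * r := by
    rw [← infDist_closure]
    exact (infDist_le_dist_of_mem hp).trans hyp
  have hmfun : mfun p - 3 * r ≤ mfun y := by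
    have := lipschitzWith_mfun.dist_le_mul p y
    rw [NNReal.coe_one, one_mul, Real.dist_eq, dist_comm] at this
    linarith [le_abs_self (mfun p - mfun y)]
  refine ⟨⟨by linarith [dist_nonneg (x := y) (y := z)], ?_⟩, hlower, hupper⟩
  nlinarith

def innerRatio (a : ℝ) : ℝ := (6 * (1 + a) ^ 2)⁻¹

lemma innerRatio_pos (ha : 0 ≤ a) : 0 < innerRatio a := by
  unfold innerRatio; positivity

lemma six_mul_innerRatio_mul_sq (ha : 0 ≤ a) : 6 * innerRatio a * (1 + a) ^ 2 = 1 := by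
  unfold innerRatio; field_simp

lemma six_mul_innerRatio_le_one (ha : 0 ≤ a) : 6 * innerRatio a ≤ 1 := by
  have hsq : 1 ≤ (1 + a) ^ 2 := by nlinarith
  nlinarith [six_mul_innerRatio_mul_sq ha, innerRatio_pos ha]

/-- Move from `x` towards a nearest point `p` of `F` until the distance to `p` is
`2 * innerRatio a * d(x, F)`: the ball there of half that radius stays inside `O`, even where `O`
is thin. -/
lemma exists_ball_subset_admissibleRegion (hF : F.Nonempty) {x : EuclideanSpace ℝ (Fin n)}
    (hx : x ∈ admissibleRegion F a) :
    ∃ z, dist x z ≤ infDist x F ∧ ∀ y ∈ ball z (innerRatio a * infDist x F),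
      y ∈ admissibleRegion F a ∧ dist y x ≤ infDist x F ∧
        innerRatio a * infDist x F ≤ infDist y F ∧ infDist y F ≤ infDist x F := by
  have ha := nonneg_of_mem_admissibleRegion hx
  set d := infDist x F
  obtain ⟨hd, hda⟩ := hx
  obtain ⟨p, hp, hdp⟩ := exists_mem_closure_infDist_eq_dist hF x
  set κ := innerRatio a
  have hκ : 0 < κ := innerRatio_pos ha
  have hκ6 : 6 * κ * (1 + a) ^ 2 = 1 := six_mul_innerRatio_mul_sq ha
  have hκ1 : 6 * κ ≤ 1 := six_mul_innerRatio_le_one ha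
  have hmp : d ≤ a * (1 + a) * mfun p := by
    have := mfun_le_mul_mfun_of_dist_le ha (hdp ▸ hda)
    nlinarith
  have hmul : 6 * (κ * d) * (1 + a) ≤ a * mfun p :=
    calc 6 * (κ * d) * (1 + a) = 6 * κ * (1 + a) * d := by ring
      _ ≤ 6 * κ * (1 + a) * (a * (1 + a) * mfun p) := by gcongr
      _ = a * mfun p := by linear_combination a * mfun p * hκ6
  have hrm : 6 * (κ * d) ≤ mfun p := by nlinarith [mfun_pos p]
  have hram : 6 * (κ * d) ≤ a * mfun p := by nlinarith
  set z := AffineMap.lineMap p x (2 * κ)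
  have hzp : dist z p = 2 * (κ * d) := by
    rw [dist_lineMap_left, Real.norm_eq_abs, abs_of_pos (by positivity), dist_comm, ← hdp]
    ring
  have hzx : dist x z = (1 - 2 * κ) * d := by
    rw [dist_comm, dist_lineMap_right, Real.norm_eq_abs, abs_of_nonneg (by linarith), dist_comm,
      ← hdp]
  have hzF : 2 * (κ * d) ≤ infDist z F := by
    linarith [infDist_le_infDist_add_dist (x := x) (y := z) (s := F)]
  refine ⟨z, by nlinarith, fun y hy => ?_⟩
  obtain ⟨hyO, hlower, hupper⟩ := mem_admissibleRegion_of_mem_ball ha hp hzp.le hzF hrm hram hy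
  have hyz := mem_ball.1 hy
  refine ⟨hyO, ?_, hlower, by nlinarith⟩
  nlinarith [dist_triangle y z x, dist_comm x z]

lemma gaussMeasure_ball_le_of_mem_admissibleRegion {c : ℝ} (hc : 0 < c)
    {x z : EuclideanSpace ℝ (Fin n)} (hx : x ∈ admissibleRegion F a)
    (hxz : dist x z ≤ infDist x F) :
    gaussMeasure n (ball x (c * infDist x F)) ≤
      ENNReal.ofReal (Real.exp (2 * ((c + 2) * a) + ((c + 2) * a) ^ 2 / 2) *
          (c / innerRatio a) ^ n) *
        gaussMeasure n (ball z (innerRatio a * infDist x F)) := by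
  have ha := nonneg_of_mem_admissibleRegion hx
  have hκ := innerRatio_pos ha
  have hκ1 := six_mul_innerRatio_le_one ha
  set d := infDist x F
  have hd : 0 < d := hx.1
  have hda : d ≤ a * mfun x := hx.2
  rw [← mul_div_mul_right c _ hd.ne', mul_comm (innerRatio a)]
  refine gaussMeasure_ball_le_of_le_mfun (by positivity) (by positivity) ?_ ?_
    (mul_le_mul_of_nonneg_left hda (by positivity) |>.trans_eq (mul_assoc _ _ _).symm)
  · exact ball_subset_closedBall.trans (closedBall_subset_closedBall (by nlinarith))
  · refine ball_subset_closedBall.trans (closedBall_subset_closedBall' ?_)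
    rw [dist_comm]
    nlinarith

end admissibleRegion

section lattice

variable {n : ℕ}

def latticePoint (σ : ℝ) (v : Fin n → ℤ) : EuclideanSpace ℝ (Fin n) :=
  WithLp.toLp 2 fun i => σ * v i

lemma exists_dist_latticePoint_le (x : EuclideanSpace ℝ (Fin n)) {σ : ℝ} (hσ : 0 < σ) :
    ∃ v, dist x (latticePoint σ v) ≤ √n * σ / 2 := by
  refine ⟨fun i => round (x i / σ), ?_⟩
  have hcoord : ∀ i, dist (x i) (σ * round (x i / σ)) ≤ σ / 2 := fun i => by
    rw [Real.dist_eq, show x i - σ * round (x i / σ) = σ * (x i / σ - round (x i / σ)) by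
      field_simp, abs_mul, abs_of_pos hσ]
    linarith [mul_le_mul_of_nonneg_left (abs_sub_round (x i / σ)) hσ.le]
  rw [EuclideanSpace.dist_eq]
  calc √(∑ i, dist (x i) (latticePoint σ (fun i => round (x i / σ)) i) ^ 2)
      ≤ √(∑ _i : Fin n, (σ / 2) ^ 2) :=
        Real.sqrt_le_sqrt (Finset.sum_le_sum fun i _ =>
          pow_le_pow_left₀ dist_nonneg (hcoord i) 2)
    _ = √n * σ / 2 := by
        rw [Finset.sum_const, Finset.card_univ, Fintype.card_fin, nsmul_eq_mul,
          Real.sqrt_mul (Nat.cast_nonneg _), Real.sqrt_sq (by positivity), mul_div_assoc]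

lemma exists_finset_latticePoint_near (y : EuclideanSpace ℝ (Fin n)) {σ R : ℝ} (hσ : 0 < σ)
    (hR : 0 ≤ R) : ∃ K : Finset (Fin n → ℤ), K.card ≤ (⌊2 * R / σ⌋₊ + 1) ^ n ∧
      ∀ v, dist y (latticePoint σ v) ≤ R → v ∈ K := by
  refine ⟨Fintype.piFinset fun i => Finset.Icc ⌈(y i - R) / σ⌉ ⌊(y i + R) / σ⌋, ?_, ?_⟩
  · rw [Fintype.card_piFinset]
    refine (Finset.prod_le_pow_card _ _ _ fun i _ => ?_).trans_eq
      (by rw [Finset.card_univ, Fintype.card_fin])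
    rw [Int.card_Icc, ← Int.toNat_natCast (⌊2 * R / σ⌋₊ + 1)]
    refine Int.toNat_le_toNat ?_
    have hsplit : (y i + R) / σ = (y i - R) / σ + 2 * R / σ := by ring
    have hfloor : ⌊(y i + R) / σ⌋ ≤ ⌈(y i - R) / σ⌉ + ⌊2 * R / σ⌋ := by
      rw [hsplit, ← Int.floor_intCast_add]
      exact Int.floor_mono (by linarith [Int.le_ceil ((y i - R) / σ)])
    push_cast
    rw [Int.natCast_floor_eq_floor (by positivity)]
    linarith
  · intro v hv
    rw [Fintype.mem_piFinset]
    intro i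
    have hi : |y i - σ * v i| ≤ R := (PiLp.dist_apply_le y (latticePoint σ v) i).trans hv
    rw [abs_le] at hi
    rw [Finset.mem_Icc, Int.ceil_le, Int.le_floor, div_le_iff₀ hσ, le_div_iff₀ hσ]
    constructor <;> linarith

end lattice

lemma exists_finset_zpow_mem_Ioc {u L : ℝ} (hu : 0 < u) {Δ : ℕ} (hL : L ≤ 2 ^ Δ) :
    ∃ K : Finset ℤ, K.card ≤ Δ ∧ ∀ k : ℤ, u < 2 ^ k → 2 ^ k ≤ L * u → k ∈ K := by
  set k₀ := Int.log 2 u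
  have hlow : (2 : ℝ) ^ k₀ ≤ u := by exact_mod_cast Int.zpow_log_le_self one_lt_two hu
  have hhigh : u < (2 : ℝ) ^ (k₀ + 1) := by exact_mod_cast Int.lt_zpow_succ_log_self one_lt_two u
  refine ⟨Finset.Ioc k₀ (k₀ + Δ), by simp, fun k hk hkL => Finset.mem_Ioc.2 ⟨?_, ?_⟩⟩
  · exact (zpow_lt_zpow_iff_right₀ one_lt_two).1 (hlow.trans_lt hk)
  · have : (2 : ℝ) ^ k < 2 ^ (k₀ + Δ + 1) := by
      calc (2 : ℝ) ^ k ≤ L * u := hkL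
        _ ≤ 2 ^ Δ * u := by gcongr
        _ < 2 ^ Δ * 2 ^ (k₀ + 1) := by gcongr
        _ = 2 ^ (k₀ + Δ + 1) := by
          rw [← zpow_natCast, ← zpow_add₀ two_ne_zero]; ring_nf
    have := (zpow_lt_zpow_iff_right₀ one_lt_two).1 this
    omega

section whitney

variable {n : ℕ}

-- small enough that every point lies within `b 2 ^ k / 4` of the lattice
def whitneyMesh (n : ℕ) (b : ℝ) (k : ℤ) : ℝ := b * 2 ^ k / (2 * (√n + 1))

def whitneyCell (d : EuclideanSpace ℝ (Fin n) → ℝ) (b : ℝ) (j : ℤ × (Fin n → ℤ)) :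
    Set (EuclideanSpace ℝ (Fin n)) :=
  {x | 2 ^ j.1 ≤ d x ∧ d x < 2 ^ (j.1 + 1) ∧
    dist x (latticePoint (whitneyMesh n b j.1) j.2) ≤ b * 2 ^ j.1 / 4}

variable {d : EuclideanSpace ℝ (Fin n) → ℝ} {b : ℝ}

lemma exists_mem_whitneyCell (hb : 0 < b) {x : EuclideanSpace ℝ (Fin n)} (hx : 0 < d x) :
    ∃ j, x ∈ whitneyCell d b j := by
  set k := Int.log 2 (d x)
  have hσ : 0 < whitneyMesh n b k := by unfold whitneyMesh; positivity
  obtain ⟨v, hv⟩ := exists_dist_latticePoint_le x hσ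
  refine ⟨(k, v), by exact_mod_cast Int.zpow_log_le_self one_lt_two hx,
    by exact_mod_cast Int.lt_zpow_succ_log_self one_lt_two (d x), hv.trans ?_⟩
  have hsqrt : √(n : ℝ) / (√n + 1) ≤ 1 := by
    rw [div_le_one (by positivity)]; linarith
  calc √n * whitneyMesh n b k / 2 = b * 2 ^ k / 4 * (√n / (√n + 1)) := by
        unfold whitneyMesh; field_simp; ring
    _ ≤ b * 2 ^ k / 4 := mul_le_of_le_one_right (by positivity) hsqrt

lemma dist_lt_of_mem_whitneyCell (hb : 0 < b) {j} {x x' : EuclideanSpace ℝ (Fin n)}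
    (hx : x ∈ whitneyCell d b j) (hx' : x' ∈ whitneyCell d b j) : dist x x' < b * d x' := by
  have h2k : (0 : ℝ) < 2 ^ j.1 := zpow_pos two_pos _
  calc dist x x' ≤ b * 2 ^ j.1 / 4 + b * 2 ^ j.1 / 4 :=
        (dist_triangle_right _ _ _).trans (add_le_add hx.2.2 hx'.2.2)
    _ < b * 2 ^ j.1 := by nlinarith
    _ ≤ b * d x' := by gcongr; exact hx'.1

lemma exists_card_whitneyCell_near_le {θ : ℝ} (hθ : 0 < θ) (hb : 0 < b) :
    ∃ N : ℕ, ∀ (d : EuclideanSpace ℝ (Fin n) → ℝ) {ι : Type*} {idx : ι → ℤ × (Fin n → ℤ)},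
      Function.Injective idx → ∀ {x : ι → EuclideanSpace ℝ (Fin n)},
      (∀ i, x i ∈ whitneyCell d b (idx i)) → ∀ y, ∃ K : Finset ι, K.card ≤ N ∧
        ∀ i, dist y (x i) ≤ d (x i) → θ * d (x i) ≤ d y → d y ≤ d (x i) → i ∈ K := by
  classical
  obtain ⟨Δ, hΔ⟩ := pow_unbounded_of_one_lt (2 / θ) one_lt_two
  set M := 4 * (2 + b / 4) * (√n + 1) / b with hMdef
  refine ⟨Δ * (⌊M⌋₊ + 1) ^ n, fun d ι idx hidx x hx y => ?_⟩
  suffices ∃ K : Finset (ℤ × (Fin n → ℤ)), K.card ≤ Δ * (⌊M⌋₊ + 1) ^ n ∧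
      ∀ i, dist y (x i) ≤ d (x i) → θ * d (x i) ≤ d y → d y ≤ d (x i) → idx i ∈ K by
    obtain ⟨K, hK, hmem⟩ := this
    exact ⟨K.preimage idx hidx.injOn,
      (Finset.card_le_card_of_injOn idx (fun i hi => Finset.mem_preimage.1 hi) hidx.injOn).trans hK,
      fun i h₁ h₂ h₃ => Finset.mem_preimage.2 (hmem i h₁ h₂ h₃)⟩
  rcases le_or_gt (d y) 0 with hy | hy
  · refine ⟨∅, by simp, fun i _ hθx _ => ?_⟩
    have : 0 < θ * d (x i) := mul_pos hθ ((zpow_pos two_pos _).trans_le (hx i).1)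
    linarith
  obtain ⟨Ks, hKs, hmemKs⟩ := exists_finset_zpow_mem_Ioc (half_pos hy) hΔ.le
  have hσ : ∀ k, 0 < whitneyMesh n b k := fun k => by unfold whitneyMesh; positivity
  choose V hV hmemV using fun k : ℤ =>
    exists_finset_latticePoint_near y (hσ k) (R := (2 + b / 4) * 2 ^ k) (by positivity)
  have hM : ∀ k : ℤ, 2 * ((2 + b / 4) * 2 ^ k) / whitneyMesh n b k = M := fun k => by
    unfold whitneyMesh; rw [hMdef]; field_simp; ring
  refine ⟨Ks.biUnion fun k => (V k).image (Prod.mk k), ?_, fun i hyx hθx hyx' => ?_⟩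
  · refine (Finset.card_biUnion_le_card_mul _ _ _ fun k _ => ?_).trans
      (Nat.mul_le_mul_right _ hKs)
    exact Finset.card_image_le.trans ((hV k).trans_eq (by rw [hM]))
  obtain ⟨hk, hk', hxq⟩ := hx i
  set k := (idx i).1
  have h2k : (2 : ℝ) ^ (k + 1) = 2 * 2 ^ k := by
    rw [zpow_add_one₀ two_ne_zero, mul_comm]
  refine Finset.mem_biUnion.2 ⟨k, hmemKs k ?_ ?_, Finset.mem_image.2 ⟨(idx i).2, hmemV k _ ?_, rfl⟩⟩
  · linarith
  · rw [div_mul_div_comm, mul_comm 2 (d y), mul_div_mul_right _ _ two_ne_zero, le_div_iff₀ hθ]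
    nlinarith
  · calc dist y (latticePoint (whitneyMesh n b k) (idx i).2)
        ≤ d (x i) + b * 2 ^ k / 4 := (dist_triangle _ _ _).trans (add_le_add hyx hxq)
      _ ≤ (2 + b / 4) * 2 ^ k := by linarith

end whitney

/-- covering lemma. For `O = {x : 0 < d(x,F) ≤ a·m(x)}` there is a countable
family of points of `O` such that the balls `B(x_k, b·d(x_k,F))` cover `O` while the total
gaussian measure of the balls `B(x_k, c·d(x_k,F))` is controlled by `γ(O)`. -/
theorem gaussian_covering_lemma (n : ℕ) (a b c : ℝ) (ha : 0 < a) (hb : 0 < b) (hc : 0 < c) :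
    ∃ C > (0 : ℝ), ∀ F : Set (EuclideanSpace ℝ (Fin n)), F.Nonempty →
      ∃ s : Set (EuclideanSpace ℝ (Fin n)), s.Countable ∧
        s ⊆ {x | 0 < infDist x F ∧ infDist x F ≤ a * mfun x} ∧
        ({x | 0 < infDist x F ∧ infDist x F ≤ a * mfun x} ⊆
          ⋃ x ∈ s, ball x (b * infDist x F)) ∧
        ∑' x : s, gaussMeasure n
            (ball (x : EuclideanSpace ℝ (Fin n)) (c * infDist (x : EuclideanSpace ℝ (Fin n)) F))
          ≤ ENNReal.ofReal C *
            gaussMeasure n {x | 0 < infDist x F ∧ infDist x F ≤ a * mfun x} := by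
  classical
  have hκ := innerRatio_pos ha.le
  obtain ⟨N, hN⟩ := exists_card_whitneyCell_near_le (n := n) hκ hb
  set C₀ := Real.exp (2 * ((c + 2) * a) + ((c + 2) * a) ^ 2 / 2) * (c / innerRatio a) ^ n
  have hC₀ : 0 < C₀ := mul_pos (Real.exp_pos _) (pow_pos (div_pos hc hκ) n)
  refine ⟨C₀ * (N + 1 : ℕ), by positivity, fun F hF => ?_⟩
  change ∃ s, _ ∧ s ⊆ admissibleRegion F a ∧ admissibleRegion F a ⊆ _ ∧
    _ ≤ _ * gaussMeasure n (admissibleRegion F a)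
  let J := {j // (whitneyCell (infDist · F) b j ∩ admissibleRegion F a).Nonempty}
  choose x hxcell hxO using fun j : J => j.2
  choose z hxz hz using fun j => exists_ball_subset_admissibleRegion hF (hxO j)
  refine ⟨range x, countable_range x, range_subset_iff.2 hxO, fun y hy => ?_, ?_⟩
  · obtain ⟨j, hj⟩ := exists_mem_whitneyCell (d := (infDist · F)) hb hy.1
    let j' : J := ⟨j, y, hj, hy⟩
    exact mem_biUnion (mem_range_self j')
      (mem_ball.2 (dist_lt_of_mem_whitneyCell hb hj (hxcell j')))
  set T := fun j => ball (z j) (innerRatio a * infDist (x j) F)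
  have hoverlap : ∀ y, ∃ K : Finset J, K.card ≤ N + 1 ∧ ∀ j, y ∈ T j → j ∈ K := fun y => by
    obtain ⟨K, hK, hmem⟩ := hN (infDist · F) Subtype.val_injective hxcell y
    exact ⟨K, hK.trans N.le_succ, fun j hy => hmem j (hz j y hy).2.1 (hz j y hy).2.2.1
      (hz j y hy).2.2.2⟩
  calc ∑' p : range x, gaussMeasure n (ball (p : EuclideanSpace ℝ (Fin n)) (c * infDist p.1 F))
      ≤ ∑' j, gaussMeasure n (ball (x j) (c * infDist (x j) F)) :=
        ENNReal.tsum_le_tsum_comp_of_surjective rangeFactorization_surjective _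
    _ ≤ ∑' j, ENNReal.ofReal C₀ * gaussMeasure n (T j) :=
        ENNReal.tsum_le_tsum fun j =>
          gaussMeasure_ball_le_of_mem_admissibleRegion hc (hxO j) (hxz j)
    _ = ENNReal.ofReal C₀ * ∑' j, gaussMeasure n (T j) := ENNReal.tsum_mul_left
    _ ≤ ENNReal.ofReal C₀ * ((N + 1 : ℕ) * gaussMeasure n (⋃ j, T j)) := by
        gcongr
        exact tsum_measure_le_of_bounded_overlap _ (fun _ => measurableSet_ball) hoverlap
    _ ≤ ENNReal.ofReal C₀ * ((N + 1 : ℕ) * gaussMeasure n (admissibleRegion F a)) := by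
        gcongr
        exact iUnion_subset fun j y hy => (hz j y hy).1
    _ = ENNReal.ofReal (C₀ * (N + 1 : ℕ)) * gaussMeasure n (admissibleRegion F a) := by
        rw [ENNReal.ofReal_mul (p := C₀) hC₀.le, ENNReal.ofReal_natCast, mul_assoc]

end
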